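/- arXiv:2205.06857 — 3 statements merged into one kernel-verified Lean document; each statement's English description precedes it below -/
import Mathlib

section
/- In the depth-2 gerrymandering instance constructed from a Set Cover instance (U,F,t) in which every element belongs to exactly d ≥ 3 sets: for any district-partition 𝒟 of G into k = t+3 districts, if the preferred candidate p does not win the district of 𝒟 containing the root r, then 𝒟 is not satisfying for p (that is, some candidate other than p leads at least as many districts as p wins). -/
/-!
A district won by `p` that avoids the root contains a `p`-voter other than `r`, i.e. some `w_i`.
Being connected and avoiding `r`, it lies inside the pendant path `w_i – w'_i`, and it cannot contain
`w'_i` or `p` and `q` would tie; so it is `{w_i}`. The district of `w'_i` then cannot reach `w_i`,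
so it is `{w'_i}`, which `q` leads. Hence `w_i ↦ w'_i` injects the districts won by `p` into those
led by `q`.
-/

attribute [local instance] Classical.propDecidable

/-- Candidate `c` *leads* district `D` (unweighted): `c`'s vote count is at least that of
every candidate. -/
def leadsIn {V C : Type*} (χ : V → C) (c : C) (D : Finset V) : Prop :=
  ∀ c' : C, (D.filter fun x => χ x = c').card ≤ (D.filter fun x => χ x = c).card

/-- Candidate `c` *wins* district `D` (unweighted): `c`'s vote count strictly exceeds that of
every other candidate. -/
def winsIn {V C : Type*} (χ : V → C) (c : C) (D : Finset V) : Prop :=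
  ∀ c' : C, c' ≠ c → (D.filter fun x => χ x = c').card < (D.filter fun x => χ x = c).card

/-- A district-partition of `G` into `k` districts: `k` pairwise-disjoint nonempty vertex sets
covering all vertices, each inducing a connected subgraph. -/
def IsDistrictPartition {V : Type*} (G : SimpleGraph V) (k : ℕ) (P : Finset (Finset V)) : Prop :=
  P.card = k ∧ (∀ D ∈ P, D.Nonempty) ∧
    (∀ D ∈ P, ∀ D' ∈ P, D ≠ D' → Disjoint D D') ∧
    (∀ x : V, ∃ D ∈ P, x ∈ D) ∧
    (∀ D ∈ P, (G.induce (D : Set V)).Connected)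

/-- A district-partition is *satisfying* for the preferred candidate `p` if `p` wins strictly
more districts than any other candidate leads. -/
def SatisfyingFor {V C : Type*} (χ : V → C) (p : C) (P : Finset (Finset V)) : Prop :=
  ∀ q : C, q ≠ p →
    (P.filter fun D => leadsIn χ q D).card < (P.filter fun D => winsIn χ p D).card

/-- Vertices of the depth-2 gerrymandering instance: the root `r`, weight-branch vertices
`w_i, w'_i` for `i ∈ [d]`, set-branch vertices `s_i, s'_i` for `i ∈ [m]`, and element leaves
`v^j_l` for `j ∈ [n]`, `l ∈ [d]`. -/
inductive V2 (n m d : ℕ) : Type where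
  | root
  | w (i : Fin d)
  | w' (i : Fin d)
  | s (i : Fin m)
  | s' (i : Fin m)
  | v (j : Fin n) (l : Fin d)
  deriving DecidableEq, Fintype

/-- Candidates of the depth-2 instance: preferred candidate `p`, adversary `q`,
element candidates `a_j`, and set candidates `b_i`. -/
inductive C2 (n m : ℕ) : Type where
  | p
  | q
  | a (j : Fin n)
  | b (i : Fin m)
  deriving DecidableEq

/-- Candidate preferences of the depth-2 instance. -/
def chi2 {n m d : ℕ} : V2 n m d → C2 n m
  | .root => .p
  | .w _ => .p
  | .w' _ => .q
  | .s i => .b i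
  | .s' i => .b i
  | .v j _ => .a j

/-- The depth-2 tree: the root is adjacent to each `w_i` and each `s_i`; `w'_i` is attached to
`w_i`; `s'_i` is attached to `s_i`; and the leaf `v^j_l` is attached to `s_{att j l}`, where
`att j` enumerates (bijectively) the sets containing element `e_j`. -/
def G2 {n m d : ℕ} (att : Fin n → Fin d → Fin m) : SimpleGraph (V2 n m d) :=
  SimpleGraph.fromRel (fun x y =>
    (x = V2.root ∧ ∃ i, y = V2.w i) ∨
    (∃ i, x = V2.w i ∧ y = V2.w' i) ∨
    (x = V2.root ∧ ∃ i, y = V2.s i) ∨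
    (∃ i, x = V2.s i ∧ y = V2.s' i) ∨
    (∃ j l, x = V2.s (att j l) ∧ y = V2.v j l))

section InducedConnected

variable {V : Type*} {G : SimpleGraph V} {D : Finset V}

theorem subset_of_induce_connected (hconn : (G.induce (D : Set V)).Connected) {T : Set V}
    (hT : ∀ u ∈ T, ∀ v ∈ D, G.Adj u v → v ∈ T) {x : V} (hxD : x ∈ D) (hxT : x ∈ T) :
    (D : Set V) ⊆ T := by
  intro y hy
  obtain ⟨walk⟩ := hconn.preconnected ⟨x, hxD⟩ ⟨y, hy⟩
  suffices ∀ (u v : (D : Set V)), (G.induce (D : Set V)).Walk u v → (u : V) ∈ T → (v : V) ∈ T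
    from this _ _ walk hxT
  intro u v walk
  induction walk with
  | nil => exact id
  | cons hadj _ ih => exact fun hu => ih (hT _ hu _ (Subtype.property _) hadj)

theorem eq_singleton_of_induce_connected (hconn : (G.induce (D : Set V)).Connected) {x : V}
    (hx : x ∈ D) (hnbr : ∀ y ∈ D, ¬ G.Adj x y) : D = {x} := by
  refine Finset.eq_singleton_iff_unique_mem.2 ⟨hx, fun y hy => ?_⟩
  exact subset_of_induce_connected hconn (T := {x})
    (fun u hu v hv hadj => absurd (hu ▸ hadj) (hnbr v hv)) hx rfl hy

end InducedConnected

section Voting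

variable {V C : Type*} {χ : V → C}

theorem exists_mem_of_winsIn {c : C} {D : Finset V} (hwin : winsIn χ c D) (hD : D.Nonempty) :
    ∃ x ∈ D, χ x = c := by
  obtain ⟨x, hx⟩ := hD
  by_contra! hnone
  have := hwin (χ x) (hnone x hx)
  rw [Finset.filter_false_of_mem hnone] at this
  exact Nat.not_lt_zero _ this

theorem leadsIn_singleton (x : V) : leadsIn χ (χ x) {x} := fun c' => by
  calc _ ≤ ({x} : Finset V).card := Finset.card_filter_le _ _
    _ = _ := by rw [Finset.filter_true_of_mem fun y hy => by rw [Finset.mem_singleton.1 hy]]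

theorem not_winsIn_pair [DecidableEq V] {a b : V} (hab : χ a ≠ χ b) :
    ¬ winsIn χ (χ a) {a, b} := by
  intro hwin
  have := hwin (χ b) hab.symm
  simp [Finset.filter_insert, Finset.filter_singleton, hab, hab.symm] at this

end Voting

namespace V2

variable {n m d : ℕ}

def swapW : V2 n m d → V2 n m d
  | w i => w' i
  | w' i => w i
  | x => x

theorem swapW_involutive : Function.Involutive (swapW : V2 n m d → V2 n m d) := by
  intro x; cases x <;> rfl

theorem eq_root_or_w_of_chi2_eq_p {x : V2 n m d} (hx : chi2 x = C2.p) :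
    x = root ∨ ∃ i, x = w i := by
  cases x <;> simp_all [chi2]

end V2

section Depth2

variable {n m d : ℕ} {att : Fin n → Fin d → Fin m}

theorem G2_adj_w {i : Fin d} {x : V2 n m d} :
    (G2 att).Adj (V2.w i) x ↔ x = V2.root ∨ x = V2.w' i := by
  cases x <;> simp [G2, SimpleGraph.fromRel_adj, eq_comm]

theorem G2_adj_w' {i : Fin d} {x : V2 n m d} : (G2 att).Adj (V2.w' i) x ↔ x = V2.w i := by
  cases x <;> simp [G2, SimpleGraph.fromRel_adj, eq_comm]

theorem eq_singleton_w_of_winsIn {D : Finset (V2 n m d)}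
    (hconn : ((G2 att).induce (D : Set (V2 n m d))).Connected) (hroot : V2.root ∉ D)
    (hwin : winsIn chi2 C2.p D) (hne : D.Nonempty) : ∃ i, D = {V2.w i} := by
  obtain ⟨x, hxD, hx⟩ := exists_mem_of_winsIn hwin hne
  obtain ⟨i, rfl⟩ :=
    (V2.eq_root_or_w_of_chi2_eq_p hx).resolve_left (by rintro rfl; exact hroot hxD)
  have hsub : (D : Set (V2 n m d)) ⊆ {V2.w i, V2.w' i} := by
    refine subset_of_induce_connected hconn (fun u hu v hv hadj => ?_) hxD (by simp)
    rcases hu with rfl | rfl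
    · rcases G2_adj_w.1 hadj with rfl | rfl
      · exact absurd hv hroot
      · simp
    · simp [G2_adj_w'.1 hadj]
  refine ⟨i, Finset.eq_singleton_iff_unique_mem.2 ⟨hxD, fun y hy => ?_⟩⟩
  rcases hsub hy with h | rfl
  · exact h
  · have hpair : D = {V2.w i, V2.w' i} :=
      Finset.Subset.antisymm (fun z hz => by simpa using hsub hz)
        (by simp [Finset.insert_subset_iff, hxD, hy])
    exact (not_winsIn_pair (χ := chi2) (a := V2.w i) (b := V2.w' i) (by simp [chi2])
      (hpair ▸ hwin)).elim

theorem singleton_w'_mem_of_singleton_w_mem {k : ℕ} {P : Finset (Finset (V2 n m d))}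
    (hP : IsDistrictPartition (G2 att) k P) {i : Fin d} (hw : {V2.w i} ∈ P) :
    {V2.w' i} ∈ P := by
  obtain ⟨-, -, hdisj, hcover, hconn⟩ := hP
  obtain ⟨D, hD, hw'D⟩ := hcover (V2.w' i)
  have hne : D ≠ {V2.w i} := by rintro rfl; simp at hw'D
  have hwD : V2.w i ∉ D := Finset.disjoint_left.1 (hdisj _ hw _ hD hne.symm) (by simp)
  have := eq_singleton_of_induce_connected (hconn D hD) hw'D
    (fun y hy hadj => hwD (G2_adj_w'.1 hadj ▸ hy))
  exact this ▸ hD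

end Depth2

theorem depth2_win_root_general (n m d t : ℕ)
    (att : Fin n → Fin d → Fin m)
    (P : Finset (Finset (V2 n m d)))
    (hP : IsDistrictPartition (G2 att) (t + 3) P)
    (hlose : ∀ D ∈ P, V2.root ∈ D → ¬ winsIn chi2 C2.p D) :
    ¬ SatisfyingFor chi2 C2.p P := by
  have hmaps : ∀ D ∈ P.filter (winsIn chi2 C2.p),
      D.image V2.swapW ∈ P.filter (leadsIn chi2 C2.q) := by
    intro D hD
    obtain ⟨hDP, hwin⟩ := Finset.mem_filter.1 hD
    obtain ⟨i, rfl⟩ := eq_singleton_w_of_winsIn (hP.2.2.2.2 D hDP) (fun h => hlose D hDP h hwin)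
      hwin (hP.2.1 D hDP)
    exact Finset.mem_filter.2
      ⟨singleton_w'_mem_of_singleton_w_mem hP hDP, leadsIn_singleton (χ := chi2) (V2.w' i)⟩
  have hle := Finset.card_le_card_of_injOn _ hmaps
    (Finset.image_injective V2.swapW_involutive.injective).injOn
  exact fun hsat => (hsat C2.q (by simp)).not_ge hle

/-- Observation 2 of the paper.  In the depth-2 gerrymandering instance
constructed from a Set Cover instance `(U, F, t)` in which every element belongs to exactly
`d ≥ 3` sets: for any district-partition `𝒟` of `G` into `k = t + 3` districts, if the
preferred candidate `p` does not win the district of `𝒟` containing the root `r`, then `𝒟`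
is not satisfying for `p`. -/
theorem depth2_win_root (n m d t : ℕ) (hd : 3 ≤ d) (htm : t ≤ m)
    (S : Fin m → Finset (Fin n))
    (hfreq : ∀ j : Fin n, (Finset.univ.filter fun i => j ∈ S i).card = d)
    (att : Fin n → Fin d → Fin m)
    (hattmem : ∀ j l, j ∈ S (att j l))
    (hattinj : ∀ j, Function.Injective (att j))
    (P : Finset (Finset (V2 n m d)))
    (hP : IsDistrictPartition (G2 att) (t + 3) P)
    (hlose : ∀ D ∈ P, V2.root ∈ D → ¬ winsIn chi2 C2.p D) :
    ¬ SatisfyingFor chi2 C2.p P :=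
  depth2_win_root_general n m d t att P hP hlose
end

section
/- Let (U,F,t) be a Set Cover instance in which every element belongs to exactly d ≥ 3 sets. If the depth-2 gerrymandering instance constructed from (U,F,t) admits a district-partition into k = t+3 districts that is satisfying for the preferred candidate p, then there exists X ⊆ F with |X| ≤ t and ∪_{S∈X} S = U. -/
attribute [local instance] Classical.propDecidable

/-! Let `R` be the district of the root. Every other district is connected without the root, so
it lies inside a single branch. If `a` of the vertices `w_i` are cut off from `R`, then `p` wins at
most `a + 1` districts (`R` and singletons `{w_i}`), whereas the districts of the corresponding
`w'_i` are `a` distinct districts led by `q`. Satisfaction forces equality, so `p` wins `R`. The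
districts won by `p`, those led by `q`, and those inside set branches are disjoint, hence
`(a + 1) + a + #X ≤ t + 3` where `X` is the set of set branches not contained in `R`; and `a ≥ 1`,
since otherwise any district other than `R` has no `p` voter and is led by another candidate.
So `#X ≤ t`, and `X` is a cover: if all `d` leaves of `e_j` were in `R`, then `a_j` would have `d`
votes there, while `p` has at most `1 + (d - a) ≤ d`. -/

open Finset

section Votes

variable {V C : Type*} {χ : V → C} {c c' : C} {D : Finset V}

theorem exists_mem_of_winsIn_s5 (h : winsIn χ c D) (hc : c' ≠ c) : ∃ x ∈ D, χ x = c := by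
  obtain ⟨x, hx⟩ := card_pos.mp (Nat.zero_lt_of_lt (h c' hc))
  exact ⟨x, (mem_filter.mp hx).1, (mem_filter.mp hx).2⟩

theorem exists_mem_of_leadsIn (h : leadsIn χ c D) (hD : D.Nonempty) : ∃ x ∈ D, χ x = c := by
  obtain ⟨y, hy⟩ := hD
  have hy' : 0 < #(D.filter fun x => χ x = χ y) := card_pos.mpr ⟨y, mem_filter.mpr ⟨hy, rfl⟩⟩
  obtain ⟨x, hx⟩ := card_pos.mp (hy'.trans_le (h (χ y)))
  exact ⟨x, (mem_filter.mp hx).1, (mem_filter.mp hx).2⟩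

theorem winsIn.not_leadsIn (h : winsIn χ c D) (hc : c' ≠ c) : ¬ leadsIn χ c' D := fun h' =>
  (h c' hc).not_ge (h' c)

theorem exists_leadsIn (hD : D.Nonempty) : ∃ x ∈ D, leadsIn χ (χ x) D := by
  obtain ⟨x, hx, hmax⟩ := exists_max_image D (fun x => #(D.filter fun y => χ y = χ x)) hD
  refine ⟨x, hx, fun c' => ?_⟩
  rcases (D.filter fun y => χ y = c').eq_empty_or_nonempty with h | ⟨y, hy⟩
  · simp [h]
  · obtain ⟨hyD, rfl⟩ := mem_filter.mp hy
    exact hmax y hyD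

theorem leadsIn_of_card_le_two (hD : #D ≤ 2) {x : V} (hx : x ∈ D) : leadsIn χ (χ x) D := by
  intro c'
  have hpos : 1 ≤ #(D.filter fun y => χ y = χ x) := card_pos.mpr ⟨x, mem_filter.mpr ⟨hx, rfl⟩⟩
  by_cases hc : c' = χ x
  · rw [hc]
  have hdisj : Disjoint (D.filter fun y => χ y = c') (D.filter fun y => χ y = χ x) :=
    disjoint_filter.mpr fun _ _ h h' => hc (h.symm.trans h')
  have := card_union_of_disjoint hdisj ▸ card_le_card (union_subset (filter_subset _ D)
    (filter_subset _ D))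
  omega

theorem card_filter_winsIn_add_card_filter_leadsIn_add_card_le {P Q : Finset (Finset V)}
    {p q : C} (hqp : q ≠ p) (hP : ∀ D ∈ P, D.Nonempty) (hQP : Q ⊆ P)
    (hQ : ∀ D ∈ Q, ∀ x ∈ D, χ x ≠ p ∧ χ x ≠ q) :
    #(P.filter fun D => winsIn χ p D) + #(P.filter fun D => leadsIn χ q D) + #Q ≤ #P := by
  have h₁ : Disjoint (P.filter fun D => winsIn χ p D) (P.filter fun D => leadsIn χ q D) :=
    disjoint_filter.mpr fun _ _ hw => hw.not_leadsIn hqp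
  have h₂ : Disjoint ((P.filter fun D => winsIn χ p D) ∪ P.filter fun D => leadsIn χ q D) Q := by
    refine disjoint_left.mpr fun D hD hDQ => ?_
    rcases mem_union.mp hD with hD | hD <;> obtain ⟨hDP, h⟩ := mem_filter.mp hD
    · obtain ⟨x, hx, hχ⟩ := exists_mem_of_winsIn_s5 h hqp
      exact (hQ D hDQ x hx).1 hχ
    · obtain ⟨x, hx, hχ⟩ := exists_mem_of_leadsIn h (hP D hDP)
      exact (hQ D hDQ x hx).2 hχ
  rw [← card_union_of_disjoint h₁, ← card_union_of_disjoint h₂]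
  exact card_le_card (union_subset (union_subset (filter_subset _ P) (filter_subset _ P)) hQP)

end Votes

namespace SimpleGraph

variable {V β : Type*} {G : SimpleGraph V} {s : Set V}

theorem Preconnected.induce_apply_eq (h : (G.induce s).Preconnected) {f : V → β}
    (hf : ∀ x ∈ s, ∀ y ∈ s, G.Adj x y → f x = f y) {x y : V} (hx : x ∈ s) (hy : y ∈ s) :
    f x = f y := by
  suffices ∀ {a b : s}, (G.induce s).Walk a b → f a = f b from this (h ⟨x, hx⟩ ⟨y, hy⟩).some
  intro a b p
  induction p with
  | nil => rfl
  | cons hadj _ ih => exact (hf _ (Subtype.prop _) _ (Subtype.prop _) hadj).trans ih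

theorem Preconnected.induce_exists_adj (h : (G.induce s).Preconnected) {x y : V} (hx : x ∈ s)
    (hy : y ∈ s) (hxy : x ≠ y) : ∃ z ∈ s, G.Adj x z := by
  obtain ⟨p⟩ := h ⟨x, hx⟩ ⟨y, hy⟩
  exact ⟨_, p.snd.2, p.adj_snd (p.not_nil_of_ne (Subtype.coe_ne_coe.mp hxy))⟩

end SimpleGraph

section Tree

variable {n m d : ℕ} {att : Fin n → Fin d → Fin m}

def branch (att : Fin n → Fin d → Fin m) : V2 n m d → Option (Fin d ⊕ Fin m)
  | .root => none
  | .w i | .w' i => some (.inl i)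
  | .s i | .s' i => some (.inr i)
  | .v j l => some (.inr (att j l))

theorem branch_eq_inl_iff {x : V2 n m d} {i : Fin d} :
    branch att x = some (.inl i) ↔ x = .w i ∨ x = .w' i := by
  cases x <;> simp [branch, eq_comm]

theorem chi2_eq_p_iff {x : V2 n m d} : chi2 x = .p ↔ x = .root ∨ ∃ i, x = .w i := by
  cases x <;> simp [chi2]

theorem chi2_ne_p_and_ne_q_of_branch_eq_inr {x : V2 n m d} {i : Fin m}
    (h : branch att x = some (.inr i)) : chi2 x ≠ .p ∧ chi2 x ≠ .q := by
  cases x <;> simp_all [branch, chi2]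

theorem G2_adj_branch {x y : V2 n m d} (h : (G2 att).Adj x y) :
    x = .root ∨ y = .root ∨ branch att x = branch att y := by
  rw [G2, SimpleGraph.fromRel_adj] at h
  obtain ⟨-, h | h⟩ := h <;>
    rcases h with
      ⟨rfl, _, rfl⟩ | ⟨_, rfl, rfl⟩ | ⟨rfl, _, rfl⟩ | ⟨_, rfl, rfl⟩ | ⟨_, _, rfl, rfl⟩ <;>
    simp [branch]

theorem eq_w_of_G2_adj_w' {x : V2 n m d} {i : Fin d} (h : (G2 att).Adj (.w' i) x) :
    x = .w i := by
  rw [G2, SimpleGraph.fromRel_adj] at h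
  obtain ⟨-, h | h⟩ := h <;>
    rcases h with ⟨h₁, _, h₂⟩ | ⟨_, h₁, h₂⟩ | ⟨h₁, _, h₂⟩ | ⟨_, h₁, h₂⟩ | ⟨_, _, h₁, h₂⟩ <;>
    simp_all

end Tree

theorem IsDistrictPartition.eq_of_mem_of_mem {V : Type*} {G : SimpleGraph V} {k : ℕ}
    {P : Finset (Finset V)} (hP : IsDistrictPartition G k P) {D D' : Finset V} (hD : D ∈ P)
    (hD' : D' ∈ P) {x : V} (hx : x ∈ D) (hx' : x ∈ D') : D = D' := by
  by_contra hne
  exact disjoint_left.mp (hP.2.2.1 D hD D' hD' hne) hx hx'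

section Districts

variable {n m d k : ℕ} {att : Fin n → Fin d → Fin m} {P : Finset (Finset (V2 n m d))}
  {D R : Finset (V2 n m d)}

theorem branch_eq_of_mem (hP : IsDistrictPartition (G2 att) k P) (hD : D ∈ P)
    (hr : V2.root ∉ D) {x y : V2 n m d} (hx : x ∈ D) (hy : y ∈ D) :
    branch att x = branch att y := by
  refine (hP.2.2.2.2 D hD).preconnected.induce_apply_eq (fun a ha b hb hab => ?_) hx hy
  rcases G2_adj_branch hab with rfl | rfl | h
  exacts [absurd ha hr, absurd hb hr, h]

theorem subset_pair_of_branch_eq_inl (hP : IsDistrictPartition (G2 att) k P) (hD : D ∈ P)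
    (hr : V2.root ∉ D) {x : V2 n m d} (hx : x ∈ D) {i : Fin d}
    (hi : branch att x = some (.inl i)) : D ⊆ {.w i, .w' i} := fun y hy => by
  simpa using branch_eq_inl_iff.mp ((branch_eq_of_mem hP hD hr hy hx).trans hi)

theorem w_mem_of_w'_mem (hP : IsDistrictPartition (G2 att) k P) (hD : D ∈ P)
    (hr : V2.root ∈ D) {i : Fin d} (hi : V2.w' i ∈ D) : V2.w i ∈ D := by
  obtain ⟨x, hx, hadj⟩ := (hP.2.2.2.2 D hD).preconnected.induce_exists_adj hi hr (by simp)
  rwa [← eq_w_of_G2_adj_w' hadj]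

def cutWeights (R : Finset (V2 n m d)) : Finset (Fin d) :=
  univ.filter fun i => V2.w i ∉ R

def cutSets (att : Fin n → Fin d → Fin m) (R : Finset (V2 n m d)) : Finset (Fin m) :=
  univ.filter fun i => ∃ x ∉ R, branch att x = some (.inr i)

theorem filter_winsIn_p_subset (hP : IsDistrictPartition (G2 att) k P) (hR : R ∈ P)
    (hrR : V2.root ∈ R) :
    (P.filter fun D => winsIn chi2 .p D) ⊆ insert R ((cutWeights R).image fun i => {V2.w i}) := by
  intro D hD
  obtain ⟨hDP, hwin⟩ := mem_filter.mp hD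
  obtain ⟨x, hx, hxp⟩ := exists_mem_of_winsIn_s5 hwin (c' := .q) (by simp)
  by_cases hr : V2.root ∈ D
  · exact mem_insert.mpr (.inl (hP.eq_of_mem_of_mem hDP hR hr hrR))
  obtain ⟨i, rfl⟩ := (chi2_eq_p_iff.mp hxp).resolve_left (by rintro rfl; exact hr hx)
  have hpair := subset_pair_of_branch_eq_inl hP hDP hr hx rfl
  have hw' : V2.w' i ∉ D := fun h =>
    hwin.not_leadsIn (c' := .q) (by simp)
      (leadsIn_of_card_le_two ((card_le_card hpair).trans card_le_two) h)
  have hDw : D = {V2.w i} := by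
    refine Subset.antisymm (fun y hy => ?_) (singleton_subset_iff.mpr hx)
    rcases mem_insert.mp (hpair hy) with rfl | h
    · exact mem_singleton_self _
    · exact absurd (mem_singleton.mp h ▸ hy) hw'
  refine mem_insert_of_mem (mem_image.mpr ⟨i, mem_filter.mpr ⟨mem_univ _, fun hwR => ?_⟩, hDw.symm⟩)
  exact hr (hP.eq_of_mem_of_mem hDP hR hx hwR ▸ hrR)

end Districts

section Counting

variable {n m d k : ℕ} {att : Fin n → Fin d → Fin m} {P : Finset (Finset (V2 n m d))}
  {R : Finset (V2 n m d)}

theorem card_cutWeights_le_card_filter_leadsIn_q (hP : IsDistrictPartition (G2 att) k P)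
    (hR : R ∈ P) (hrR : V2.root ∈ R) :
    #(cutWeights R) ≤ #(P.filter fun D => leadsIn chi2 .q D) := by
  refine card_le_card_of_forall_subsingleton (fun i D => V2.w' i ∈ D) (fun i hi => ?_) ?_
  · obtain ⟨D, hD, hw'⟩ := hP.2.2.2.1 (V2.w' i)
    have hr : V2.root ∉ D := fun hr => (mem_filter.mp hi).2
      (w_mem_of_w'_mem hP hR hrR (hP.eq_of_mem_of_mem hD hR hr hrR ▸ hw'))
    have hcard := (card_le_card (subset_pair_of_branch_eq_inl hP hD hr hw' rfl)).trans card_le_two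
    exact ⟨D, mem_filter.mpr ⟨hD, leadsIn_of_card_le_two hcard hw'⟩, hw'⟩
  · intro D hD i ⟨hi, hiD⟩ i' ⟨_, hi'D⟩
    have hDP := (mem_filter.mp hD).1
    have hr : V2.root ∉ D := fun hr => (mem_filter.mp hi).2
      (hP.eq_of_mem_of_mem hDP hR hr hrR ▸ w_mem_of_w'_mem hP hDP hr hiD)
    simpa [branch] using branch_eq_of_mem hP hDP hr hiD hi'D

theorem card_cutSets_le (hP : IsDistrictPartition (G2 att) k P) (hR : R ∈ P)
    (hrR : V2.root ∈ R) :
    #(cutSets att R) ≤ #(P.filter fun D => ∀ x ∈ D, chi2 x ≠ .p ∧ chi2 x ≠ .q) := by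
  refine card_le_card_of_forall_subsingleton (fun i D => ∃ x ∈ D, branch att x = some (.inr i))
    (fun i hi => ?_) ?_
  · obtain ⟨x, hxR, hxi⟩ := (mem_filter.mp hi).2
    obtain ⟨D, hD, hx⟩ := hP.2.2.2.1 x
    have hr : V2.root ∉ D := fun hr => hxR (hP.eq_of_mem_of_mem hD hR hr hrR ▸ hx)
    refine ⟨D, mem_filter.mpr ⟨hD, fun y hy => ?_⟩, x, hx, hxi⟩
    exact chi2_ne_p_and_ne_q_of_branch_eq_inr ((branch_eq_of_mem hP hD hr hy hx).trans hxi)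
  · intro D hD i ⟨_, x, hx, hxi⟩ i' ⟨_, x', hx', hxi'⟩
    obtain ⟨hDP, hfree⟩ := mem_filter.mp hD
    have hr : V2.root ∉ D := fun hr => (hfree _ hr).1 rfl
    simpa [hxi, hxi'] using branch_eq_of_mem hP hDP hr hx hx'

theorem card_filter_winsIn_p_eq (hP : IsDistrictPartition (G2 att) k P)
    (hsat : SatisfyingFor chi2 .p P) (hR : R ∈ P) (hrR : V2.root ∈ R) :
    #(P.filter fun D => winsIn chi2 .p D) = #(cutWeights R) + 1 ∧
      #(P.filter fun D => leadsIn chi2 .q D) = #(cutWeights R) := by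
  have hwin := (card_le_card (filter_winsIn_p_subset hP hR hrR)).trans <|
    (card_insert_le _ _).trans (Nat.succ_le_succ card_image_le)
  have hlead := card_cutWeights_le_card_filter_leadsIn_q hP hR hrR
  have := hsat .q (by simp)
  omega

theorem winsIn_p_of_root_mem (hP : IsDistrictPartition (G2 att) k P)
    (hsat : SatisfyingFor chi2 .p P) (hR : R ∈ P) (hrR : V2.root ∈ R) : winsIn chi2 .p R := by
  have hsub := filter_winsIn_p_subset hP hR hrR
  have hcard : #(insert R ((cutWeights R).image fun i => ({V2.w i} : Finset (V2 n m d)))) ≤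
      #(P.filter fun D => winsIn chi2 .p D) := by
    rw [(card_filter_winsIn_p_eq hP hsat hR hrR).1]
    exact (card_insert_le _ _).trans (Nat.succ_le_succ card_image_le)
  exact (mem_filter.mp (eq_of_subset_of_card_le hsub hcard ▸ mem_insert_self R _)).2

theorem one_le_card_cutWeights (hP : IsDistrictPartition (G2 att) k P) (hk : 2 ≤ k)
    (hsat : SatisfyingFor chi2 .p P) (hR : R ∈ P) (hrR : V2.root ∈ R) :
    1 ≤ #(cutWeights R) := by
  by_contra! h
  have hempty : cutWeights R = ∅ := card_eq_zero.mp (by omega)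
  have hwR : ∀ i, V2.w i ∈ R := fun i => by
    by_contra hi
    exact notMem_empty i (hempty ▸ mem_filter.mpr ⟨mem_univ i, hi⟩)
  obtain ⟨D, hD, hDR⟩ := exists_mem_ne (hP.1 ▸ hk : 1 < #P) R
  obtain ⟨x, hx, hlead⟩ := exists_leadsIn (hP.2.1 D hD)
  have hxp : chi2 x = .p := by
    by_contra hne
    have := hsat _ hne
    have : 0 < #(P.filter fun D => leadsIn chi2 (chi2 x) D) :=
      card_pos.mpr ⟨D, mem_filter.mpr ⟨hD, hlead⟩⟩
    have := (card_filter_winsIn_p_eq hP hsat hR hrR).1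
    omega
  have hxR : x ∈ R := by
    rcases chi2_eq_p_iff.mp hxp with rfl | ⟨i, rfl⟩
    exacts [hrR, hwR i]
  exact hDR (hP.eq_of_mem_of_mem hD hR hx hxR)

theorem card_cutSets_add_le (hP : IsDistrictPartition (G2 att) k P)
    (hsat : SatisfyingFor chi2 .p P) (hR : R ∈ P) (hrR : V2.root ∈ R) :
    #(cutSets att R) + 2 * #(cutWeights R) + 1 ≤ k := by
  have hdisj := card_filter_winsIn_add_card_filter_leadsIn_add_card_le (χ := chi2) (p := .p)
    (q := .q) (by simp) hP.2.1 (filter_subset _ P) fun _ hD => (mem_filter.mp hD).2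
  have := card_cutSets_le hP hR hrR
  have := card_filter_winsIn_p_eq hP hsat hR hrR
  rw [hP.1] at hdisj
  omega

theorem exists_leaf_not_mem (hwin : winsIn chi2 .p R) (ha : 1 ≤ #(cutWeights R)) (j : Fin n) :
    ∃ l, V2.v j l ∉ R := by
  by_contra! hall
  obtain ⟨i₀, hi₀⟩ := card_pos.mp ha
  refine (hwin (.a j) (by simp)).not_ge ?_
  -- `winsIn` counts with classical decidability; switch to the derived instances of `C2`.
  rw [filter_congr_decidable, filter_congr_decidable R (chi2 · = .a j)]
  calc _ ≤ #(insert V2.root ((univ.erase i₀).image (V2.w : Fin d → V2 n m d))) := by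
        refine card_le_card fun x hx => ?_
        obtain ⟨hxR, hxp⟩ := mem_filter.mp hx
        rcases chi2_eq_p_iff.mp hxp with rfl | ⟨i, rfl⟩
        · exact mem_insert_self _ _
        · refine mem_insert_of_mem (mem_image_of_mem _ (mem_erase.mpr ⟨?_, mem_univ i⟩))
          rintro rfl
          exact (mem_filter.mp hi₀).2 hxR
    _ ≤ #(univ.erase i₀) + 1 := (card_insert_le _ _).trans (Nat.succ_le_succ card_image_le)
    _ = #(univ : Finset (Fin d)) := card_erase_add_one (mem_univ i₀)
    _ ≤ _ := card_le_card_of_injOn (V2.v j) (fun l _ => mem_filter.mpr ⟨hall l, rfl⟩)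
          fun l _ l' _ h => by simpa using h

end Counting

theorem depth2_gerrymander_imp_cover_general (n m d t : ℕ)
    (S : Fin m → Finset (Fin n))
    (att : Fin n → Fin d → Fin m)
    (hattmem : ∀ j l, j ∈ S (att j l))
    (hgerry : ∃ P : Finset (Finset (V2 n m d)),
      IsDistrictPartition (G2 att) (t + 3) P ∧ SatisfyingFor chi2 C2.p P) :
    ∃ X : Finset (Fin m), X.card ≤ t ∧ ∀ j : Fin n, ∃ i ∈ X, j ∈ S i := by
  obtain ⟨P, hP, hsat⟩ := hgerry
  obtain ⟨R, hR, hrR⟩ := hP.2.2.2.1 V2.root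
  have ha := one_le_card_cutWeights hP (by omega) hsat hR hrR
  refine ⟨cutSets att R, ?_, fun j => ?_⟩
  · have := card_cutSets_add_le hP hsat hR hrR
    omega
  · obtain ⟨l, hl⟩ := exists_leaf_not_mem (winsIn_p_of_root_mem hP hsat hR hrR) ha j
    exact ⟨att j l, mem_filter.mpr ⟨mem_univ _, _, hl, rfl⟩, hattmem j l⟩

/-- backward direction of Theorem 1.  Let `(U, F, t)` be a Set Cover
instance in which every element belongs to exactly `d ≥ 3` sets.  If the depth-2
gerrymandering instance constructed from `(U, F, t)` admits a district-partition into
`k = t + 3` districts that is satisfying for the preferred candidate `p`, then there exists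
`X ⊆ F` with `|X| ≤ t` and `∪_{S ∈ X} S = U`. -/
theorem depth2_gerrymander_imp_cover (n m d t : ℕ) (hd : 3 ≤ d) (htm : t ≤ m)
    (S : Fin m → Finset (Fin n))
    (hfreq : ∀ j : Fin n, (Finset.univ.filter fun i => j ∈ S i).card = d)
    (att : Fin n → Fin d → Fin m)
    (hattmem : ∀ j l, j ∈ S (att j l))
    (hattinj : ∀ j, Function.Injective (att j))
    (hgerry : ∃ P : Finset (Finset (V2 n m d)),
      IsDistrictPartition (G2 att) (t + 3) P ∧ SatisfyingFor chi2 C2.p P) :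
    ∃ X : Finset (Fin m), X.card ≤ t ∧ ∀ j : Fin n, ∃ i ∈ X, j ∈ S i :=
  depth2_gerrymander_imp_cover_general n m d t S att hattmem hgerry
end

section
/- Let (U,F,t) be a Set Cover instance in which every element belongs to at least one set. If there exists X ⊆ F with |X| ≤ t and ∪_{S∈X} S = U, then the subdivided-star gerrymandering instance constructed from (U,F,t) admits a district-partition into k = t+4 districts that is satisfying for the preferred candidate p. -/
attribute [local instance] Classical.propDecidable

/-- Vertices of the subdivided-star gerrymandering instance: the root `r`; branch 1 vertices
`c_1, c_2, u_1, …, u_n`; branch 2 vertices `w_1, …, w_{t-1}`; and, on each of the `t`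
selection branches `s`, the initial vertices `v_0^1, …, v_0^n` (constructor `v0`), the group
vertices `x_i` and `v_i^j` for `i ∈ [m]` (group `g_i`), and the final vertices
`y_0, …, y_m`. -/
inductive VS (n m t : ℕ) : Type where
  | root
  | c1
  | c2
  | u (j : Fin n)
  | w (i : Fin (t - 1))
  | v0 (s : Fin t) (j : Fin n)
  | x (s : Fin t) (i : Fin m)
  | v (s : Fin t) (i : Fin m) (j : Fin n)
  | y (s : Fin t) (i : Fin (m + 1))
  deriving DecidableEq, Fintype

/-- Candidates of the subdivided-star instance: the preferred candidate `p`, the ally `q`,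
element candidates `a_j` for `j ∈ [n]`, and branch candidates `b_s` for `s ∈ [t]`. -/
inductive CS (n t : ℕ) : Type where
  | p
  | q
  | a (j : Fin n)
  | b (s : Fin t)
  deriving DecidableEq

/-- Candidate preferences of the subdivided-star instance. -/
def chiS {n m t : ℕ} : VS n m t → CS n t
  | .root => .q
  | .c1 => .p
  | .c2 => .p
  | .u j => .a j
  | .w _ => .q
  | .v0 _ j => .a j
  | .x _ _ => .q
  | .v _ _ j => .a j
  | .y s _ => .b s

/-- Position of each non-root vertex along its branch, as a pair
(branch index, 0-based distance from the root along the branch minus one); the vertex at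
position 0 of each branch is adjacent to the root.  Branch 0 is `c_1, c_2, u_1, …, u_n`;
branch 1 is `w_1, …, w_{t-1}`; branch `2 + s` is selection branch `s`, ordered as
`v_0^1, …, v_0^n`, then groups `g_1, …, g_m` (group `g_i` consists of the vertices `v_i^j`
with `e_j ∉ S_i` in increasing order of `j`, then `x_i`, then the vertices `v_i^j` with
`e_j ∈ S_i` in increasing order of `j`), then `y_0, …, y_m`. -/
def posS {n m t : ℕ} (S : Fin m → Finset (Fin n)) : VS n m t → Option (ℕ × ℕ)
  | .root => none
  | .c1 => some (0, 0)
  | .c2 => some (0, 1)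
  | .u j => some (0, 2 + (j : ℕ))
  | .w i => some (1, (i : ℕ))
  | .v0 s j => some (2 + (s : ℕ), (j : ℕ))
  | .x s i => some (2 + (s : ℕ), n + (i : ℕ) * (n + 1) + (n - (S i).card))
  | .v s i j => some (2 + (s : ℕ), n + (i : ℕ) * (n + 1) +
      (if j ∈ S i then n - (S i).card + 1 + ((S i).filter fun j' => j' < j).card
       else ((S i)ᶜ.filter fun j' => j' < j).card))
  | .y s i => some (2 + (s : ℕ), n + m * (n + 1) + (i : ℕ))

/-- The subdivided star: the root is adjacent to the vertex at position 0 of each branch, and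
vertices at consecutive positions of the same branch are adjacent. -/
def GS {n m t : ℕ} (S : Fin m → Finset (Fin n)) : SimpleGraph (VS n m t) :=
  SimpleGraph.fromRel (fun a b =>
    (a = VS.root ∧ ∃ br, posS S b = some (br, 0)) ∨
    (∃ br k, posS S a = some (br, k) ∧ posS S b = some (br, k + 1)))

/-!
Fix `σ : Fin t → Fin m` listing a cover (with repetitions). District 0 is `{c₁}` and district 1
is `{c₂}`, both won by `p`; district 2 is the path `u₁ … u_n`, led only by the `a_j`; district 3
consists of `r`, `w₁ … w_{t-1}` and, on every selection branch `s`, the vertices up to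
`x_{σ s}`; district `4 + s` is the rest of branch `s`, won by `b_s` with its `m + 1` votes against
at most `m` for anybody else. In district 3 the candidate `q` wins: sending `v₀^j` of branch `s`
to the `s`-th of `r, w₁, …, w_{t-1}` and `v_i^j` to `x_i` injects the `a_j`-voters into the
`q`-voters, and the image misses `x_{σ s}` for a branch with `e_j ∈ S_{σ s}`, since `v_{σ s}^j`
then lies beyond the cut. So `p` wins two districts and every other candidate leads at most one.
Each district is connected because it is closed under stepping along its branches towards an
anchor (`r`, `u₁` or `y_m`).
-/

open Finset

theorem SimpleGraph.induce_connected_of_exists_adj_lt {V : Type*} (G : SimpleGraph V) {D : Set V}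
    {a : V} (ha : a ∈ D) (f : V → ℕ) (h : ∀ v ∈ D, v ≠ a → ∃ w ∈ D, G.Adj v w ∧ f w < f v) :
    (G.induce D).Connected := by
  have reach : ∀ N, ∀ v (hv : v ∈ D), f v = N → (G.induce D).Reachable ⟨v, hv⟩ ⟨a, ha⟩ := by
    intro N
    induction N using Nat.strong_induction_on with
    | _ N ih =>
      rintro v hv rfl
      by_cases hva : v = a
      · subst hva; rfl
      obtain ⟨w, hw, hadj, hlt⟩ := h v hv hva
      have hadj' : (G.induce D).Adj ⟨v, hv⟩ ⟨w, hw⟩ := hadj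
      exact hadj'.reachable.trans (ih _ hlt w hw rfl)
  rw [SimpleGraph.connected_iff]
  exact ⟨fun x y => (reach _ x.1 x.2 rfl).trans (reach _ y.1 y.2 rfl).symm, ⟨⟨a, ha⟩⟩⟩

theorem Finset.card_filter_lt_lt_card {α : Type*} [LinearOrder α] [DecidableLT α]
    {T : Finset α} {a : α} (ha : a ∈ T) : #{b ∈ T | b < a} < #T :=
  card_lt_card (filter_ssubset.2 ⟨a, ha, lt_irrefl a⟩)

theorem Finset.strictMonoOn_card_filter_lt {α : Type*} [LinearOrder α] [DecidableLT α]
    (T : Finset α) : StrictMonoOn (fun a => #{b ∈ T | b < a}) T := by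
  intro a ha b _ hab
  refine card_lt_card ((ssubset_iff_of_subset fun x hx => ?_).2 ⟨a, ?_, ?_⟩)
  · simp only [mem_filter] at hx ⊢
    exact ⟨hx.1, hx.2.trans hab⟩
  · exact mem_filter.2 ⟨ha, hab⟩
  · simp

section Votes

variable {V C : Type*} {χ : V → C}

theorem winsIn_singleton (a : V) : winsIn χ (χ a) {a} := by
  intro c hc
  simp [filter_singleton, Ne.symm hc]

theorem winsIn_iff [DecidableEq C] {c : C} {D : Finset V} :
    winsIn χ c D ↔ ∀ c' ≠ c, #{v ∈ D | χ v = c'} < #{v ∈ D | χ v = c} := by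
  unfold winsIn
  congr!

theorem leadsIn.exists_mem {c : C} {D : Finset V} (h : leadsIn χ c D) (hD : D.Nonempty) :
    ∃ v ∈ D, χ v = c := by
  obtain ⟨v, hv⟩ := hD
  have hpos : 0 < #{x ∈ D | χ x = χ v} := card_pos.2 ⟨v, mem_filter.2 ⟨hv, rfl⟩⟩
  obtain ⟨w, hw⟩ := card_pos.1 (hpos.trans_le (h (χ v)))
  exact ⟨w, (mem_filter.1 hw).1, (mem_filter.1 hw).2⟩

theorem leadsIn.eq_of_winsIn {c c' : C} {D : Finset V} (h : leadsIn χ c D)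
    (h' : winsIn χ c' D) : c = c' := by
  by_contra hne
  exact (h' c hne).not_ge (h c')

theorem satisfyingFor_of_two_wins {p : C} {P : Finset (Finset V)} {D₀ D₁ : Finset V}
    (h₀ : D₀ ∈ P) (h₁ : D₁ ∈ P) (hne : D₀ ≠ D₁) (hw₀ : winsIn χ p D₀) (hw₁ : winsIn χ p D₁)
    (hlead : ∀ q ≠ p, ∀ D ∈ P, ∀ D' ∈ P, leadsIn χ q D → leadsIn χ q D' → D = D') :
    SatisfyingFor χ p P := by
  intro q hq
  have hle : #{D ∈ P | leadsIn χ q D} ≤ 1 := card_le_one.2 fun D hD D' hD' => by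
    rw [mem_filter] at hD hD'
    exact hlead q hq D hD.1 D' hD'.1 hD.2 hD'.2
  have htwo : 2 ≤ #{D ∈ P | winsIn χ p D} := by
    rw [← card_pair hne]
    refine card_le_card fun D hD => ?_
    rcases mem_insert.1 hD with rfl | hD
    · exact mem_filter.2 ⟨h₀, hw₀⟩
    · rw [mem_singleton.1 hD]; exact mem_filter.2 ⟨h₁, hw₁⟩
  omega

end Votes

theorem isDistrictPartition_fibers {V : Type*} [Fintype V] [DecidableEq V] (G : SimpleGraph V)
    (k : ℕ) (f : V → ℕ) (hlt : ∀ v, f v < k) (hsurj : ∀ l < k, ∃ v, f v = l)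
    (hconn : ∀ l < k, (G.induce {v | f v = l}).Connected) :
    IsDistrictPartition G k ((range k).image fun l => univ.filter fun v => f v = l) := by
  have hinj : Set.InjOn (fun l => univ.filter fun v => f v = l) (range k) := by
    intro l hl l' _ heq
    obtain ⟨v, rfl⟩ := hsurj l (mem_range.1 hl)
    have hv : v ∈ univ.filter fun w => f w = f v := by simp
    simp only at heq
    rw [heq] at hv
    simpa using hv
  refine ⟨by rw [card_image_of_injOn hinj, card_range], ?_, ?_, fun v => ?_, ?_⟩
  · simp only [mem_image, mem_range]
    rintro _ ⟨l, hl, rfl⟩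
    obtain ⟨v, hv⟩ := hsurj l hl
    exact ⟨v, by simp [hv]⟩
  · simp only [mem_image, mem_range]
    rintro _ ⟨l, -, rfl⟩ _ ⟨l', -, rfl⟩ hne
    exact disjoint_filter.2 fun v _ h h' => hne (by rw [← h, ← h'])
  · exact ⟨_, mem_image_of_mem _ (mem_range.2 (hlt v)), by simp⟩
  · simp only [mem_image, mem_range]
    rintro _ ⟨l, hl, rfl⟩
    rw [show ((univ.filter fun v => f v = l : Finset V) : Set V) = {v | f v = l} by ext; simp]
    exact hconn l hl

theorem Finset.exists_subset_range_fin_of_card_le {α : Type*} {X : Finset α} (hX : X.Nonempty)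
    {t : ℕ} (ht : #X ≤ t) : ∃ σ : Fin t → α, ↑X ⊆ Set.range σ := by
  obtain ⟨x₀, -⟩ := hX
  refine ⟨fun s => X.toList.getD s x₀, fun x hx => ?_⟩
  obtain ⟨k, hk, rfl⟩ := List.getElem_of_mem (mem_toList.2 hx)
  exact ⟨⟨k, by rw [length_toList] at hk; omega⟩, List.getD_eq_getElem _ _ hk⟩

theorem Nat.add_mul_succ_add_lt {n i i' o : ℕ} (hi : i < i') (ho : o ≤ n) :
    n + i * (n + 1) + o < n + i' * (n + 1) := by
  have := Nat.mul_le_mul_right (n + 1) hi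
  rw [Nat.succ_mul] at this
  omega

theorem Nat.add_mul_succ_add_le_iff {n i i' o o' : ℕ} (ho : o ≤ n) (ho' : o' ≤ n) :
    n + i * (n + 1) + o ≤ n + i' * (n + 1) + o' ↔ i < i' ∨ i = i' ∧ o ≤ o' := by
  rcases lt_trichotomy i i' with h | rfl | h
  · have := Nat.add_mul_succ_add_lt h ho
    constructor <;> intro <;> omega
  · simp
  · have := Nat.add_mul_succ_add_lt h ho'
    constructor <;> intro <;> omega

namespace SubdividedStar

variable {n m t : ℕ} (S : Fin m → Finset (Fin n))

def offset (i : Fin m) (j : Fin n) : ℕ :=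
  if j ∈ S i then n - #(S i) + 1 + #{j' ∈ S i | j' < j} else #{j' ∈ (S i)ᶜ | j' < j}

theorem posS_v (s : Fin t) (i : Fin m) (j : Fin n) :
    posS S (.v s i j) = some (2 + (s : ℕ), n + i * (n + 1) + offset S i j) := rfl

variable {S}

theorem offset_lt_of_notMem {i : Fin m} {j : Fin n} (h : j ∉ S i) :
    offset S i j < n - #(S i) := by
  have := card_filter_lt_lt_card (mem_compl.2 h)
  rw [card_compl, Fintype.card_fin] at this
  rwa [offset, if_neg h]

theorem lt_offset_of_mem {i : Fin m} {j : Fin n} (h : j ∈ S i) : n - #(S i) < offset S i j := by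
  rw [offset, if_pos h]
  omega

theorem offset_le_iff {i : Fin m} {j : Fin n} : offset S i j ≤ n - #(S i) ↔ j ∉ S i :=
  ⟨fun h hj => (lt_offset_of_mem hj).not_ge h, fun h => (offset_lt_of_notMem h).le⟩

theorem offset_ne (i : Fin m) (j : Fin n) : offset S i j ≠ n - #(S i) := by
  by_cases h : j ∈ S i
  · exact (lt_offset_of_mem h).ne'
  · exact (offset_lt_of_notMem h).ne

theorem offset_le (i : Fin m) (j : Fin n) : offset S i j ≤ n := by
  by_cases h : j ∈ S i
  · have h₁ := card_filter_lt_lt_card h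
    have h₂ : #(S i) ≤ n := by simpa using card_le_univ (S i)
    rw [offset, if_pos h]
    omega
  · have := offset_lt_of_notMem h
    omega

theorem offset_injective (i : Fin m) : Function.Injective (offset S i) := by
  intro j j' hjj
  by_cases h : j ∈ S i <;> by_cases h' : j' ∈ S i
  · rw [offset, offset, if_pos h, if_pos h', Nat.add_left_cancel_iff] at hjj
    exact (strictMonoOn_card_filter_lt (S i)).injOn h h' hjj
  · have := lt_offset_of_mem h
    have := offset_lt_of_notMem h'
    omega
  · have := offset_lt_of_notMem h
    have := lt_offset_of_mem h'
    omega
  · rw [offset, offset, if_neg h, if_neg h'] at hjj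
    exact (strictMonoOn_card_filter_lt _).injOn (mem_compl.2 h) (mem_compl.2 h') hjj

theorem exists_posS_group (s : Fin t) (i : Fin m) {o : ℕ} (ho : o ≤ n) :
    ∃ v : VS n m t, posS S v = some (2 + (s : ℕ), n + i * (n + 1) + o) := by
  by_cases hx : o = n - #(S i)
  · exact ⟨.x s i, by rw [hx]; rfl⟩
  -- the offsets of x_i and of the v_i^j fill up {0, …, n}
  let g : Option (Fin n) → Fin (n + 1)
    | none => ⟨n - #(S i), by omega⟩
    | some j => ⟨offset S i j, Nat.lt_succ_of_le (offset_le i j)⟩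
  have hg : g.Injective := by
    rintro (_ | j) (_ | j') h <;> simp only [g, Fin.mk.injEq] at h
    · rfl
    · exact absurd h.symm (offset_ne i j')
    · exact absurd h (offset_ne i j)
    · rw [offset_injective i h]
  obtain ⟨_ | j, hj⟩ := ((Fintype.bijective_iff_injective_and_card g).2 ⟨hg, by simp⟩).2
    ⟨o, Nat.lt_succ_of_le ho⟩
  · exact absurd (congrArg Fin.val hj).symm hx
  · exact ⟨.v s i j, by rw [posS_v, show offset S i j = o from congrArg Fin.val hj]⟩

theorem exists_posS_sel (s : Fin t) {k : ℕ} (hk : k ≤ n + m * (n + 1) + m) :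
    ∃ v : VS n m t, posS S v = some (2 + (s : ℕ), k) := by
  rcases lt_or_ge k n with h₁ | h₁
  · exact ⟨.v0 s ⟨k, h₁⟩, rfl⟩
  rcases lt_or_ge k (n + m * (n + 1)) with h₂ | h₂
  · have hi : (k - n) / (n + 1) < m := Nat.div_lt_of_lt_mul (by rw [Nat.mul_comm]; omega)
    obtain ⟨v, hv⟩ := exists_posS_group s ⟨_, hi⟩
      (Nat.le_of_lt_add_one (Nat.mod_lt (k - n) (by omega : 0 < n + 1)))
    refine ⟨v, hv.trans ?_⟩
    have := Nat.div_add_mod' (k - n) (n + 1)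
    simp only [Option.some.injEq, Prod.mk.injEq, true_and]
    omega
  · exact ⟨.y s ⟨k - (n + m * (n + 1)), by omega⟩, by simp only [posS]; congr 2; omega⟩

theorem posS_lt_of_ne_last {v : VS n m t} {s : Fin t} {k : ℕ}
    (h : posS S v = some (2 + (s : ℕ), k)) (hv : v ≠ .y s (Fin.last m)) :
    k < n + m * (n + 1) + m := by
  cases v with
  | root => simp [posS] at h
  | v0 s' j => simp only [posS, Option.some.injEq, Prod.mk.injEq] at h; omega
  | x s' i =>
    simp only [posS, Option.some.injEq, Prod.mk.injEq] at h
    have := Nat.add_mul_succ_add_lt i.isLt (Nat.sub_le n #(S i))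
    omega
  | v s' i j =>
    simp only [posS_v, Option.some.injEq, Prod.mk.injEq] at h
    have := Nat.add_mul_succ_add_lt i.isLt (offset_le (S := S) i j)
    omega
  | y s' i =>
    simp only [posS, Option.some.injEq, Prod.mk.injEq] at h
    obtain rfl : s' = s := Fin.ext (by omega)
    have : i ≠ Fin.last m := fun hi => hv (by rw [hi])
    have := Fin.val_lt_last this
    omega
  | _ => simp only [posS, Option.some.injEq, Prod.mk.injEq] at h; omega

theorem adj_of_posS_succ {a b : VS n m t} {br k : ℕ} (ha : posS S a = some (br, k))
    (hb : posS S b = some (br, k + 1)) : (GS S).Adj a b := by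
  refine (SimpleGraph.fromRel_adj _ a b).2 ⟨?_, Or.inl (Or.inr ⟨br, k, ha, hb⟩)⟩
  rintro rfl
  simp [ha] at hb

theorem adj_root {b : VS n m t} {br : ℕ} (hb : posS S b = some (br, 0)) :
    (GS S).Adj .root b := by
  refine (SimpleGraph.fromRel_adj _ _ b).2 ⟨?_, Or.inl (Or.inl ⟨rfl, br, hb⟩)⟩
  rintro rfl
  simp [posS] at hb

variable (S)

def depth (v : VS n m t) : ℕ := (posS S v).elim 0 fun p => p.2 + 1

variable {S} in
theorem depth_eq {v : VS n m t} {br k : ℕ} (h : posS S v = some (br, k)) : depth S v = k + 1 := by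
  simp [depth, h]

variable (σ : Fin t → Fin m)

def label : VS n m t → ℕ
  | .c1 => 0
  | .c2 => 1
  | .u _ => 2
  | .root | .w _ | .v0 _ _ => 3
  | .x s i => if i ≤ σ s then 3 else 4 + s
  | .v s i j => if i < σ s ∨ i = σ s ∧ j ∉ S (σ s) then 3 else 4 + s
  | .y s _ => 4 + s

def district (l : ℕ) : Finset (VS n m t) := univ.filter fun v => label S σ v = l

def cutPos (s : Fin t) : ℕ := n + σ s * (n + 1) + (n - #(S (σ s)))

variable {S σ} in
theorem mem_district {v : VS n m t} {l : ℕ} : v ∈ district S σ l ↔ label S σ v = l := by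
  simp [district]

theorem label_of_posS_sel {v : VS n m t} {s : Fin t} {k : ℕ}
    (h : posS S v = some (2 + (s : ℕ), k)) :
    label S σ v = if k ≤ cutPos S σ s then 3 else 4 + (s : ℕ) := by
  have hcut : n - #(S (σ s)) ≤ n := Nat.sub_le _ _
  cases v with
  | root => simp [posS] at h
  | v0 s' j =>
    simp only [posS, Option.some.injEq, Prod.mk.injEq] at h
    rw [if_pos (by unfold cutPos; omega)]
    rfl
  | x s' i =>
    simp only [posS, Option.some.injEq, Prod.mk.injEq] at h
    obtain ⟨hs, rfl⟩ := h
    obtain rfl : s' = s := Fin.ext (by omega)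
    simp only [cutPos, Nat.add_mul_succ_add_le_iff (Nat.sub_le _ _) hcut, label]
    by_cases hi : i = σ s'
    · simp [hi]
    · simp [hi, le_iff_lt_or_eq, Fin.val_ne_iff.2 hi]
  | v s' i j =>
    simp only [posS_v, Option.some.injEq, Prod.mk.injEq] at h
    obtain ⟨hs, rfl⟩ := h
    obtain rfl : s' = s := Fin.ext (by omega)
    simp only [cutPos, Nat.add_mul_succ_add_le_iff (offset_le i j) hcut, label]
    by_cases hi : i = σ s'
    · simp [hi, offset_le_iff]
    · simp [hi, Fin.val_ne_iff.2 hi]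
  | y s' i =>
    simp only [posS, Option.some.injEq, Prod.mk.injEq] at h
    obtain rfl : s' = s := Fin.ext (by omega)
    have := Nat.add_mul_succ_add_lt (σ s').isLt hcut
    rw [if_neg (by unfold cutPos; omega)]
    rfl
  | _ => simp only [posS, Option.some.injEq, Prod.mk.injEq] at h; omega

theorem label_lt (v : VS n m t) : label S σ v < t + 4 := by
  cases v <;> simp only [label] <;> (try split_ifs) <;> omega

theorem exists_label_eq (hn : 0 < n) : ∀ l < t + 4, ∃ v, label S σ v = l
  | 0, _ => ⟨.c1, rfl⟩
  | 1, _ => ⟨.c2, rfl⟩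
  | 2, _ => ⟨.u ⟨0, hn⟩, rfl⟩
  | 3, _ => ⟨.root, rfl⟩
  | l + 4, hl => ⟨.y ⟨l, by omega⟩ 0, by simp only [label]; omega⟩

variable {S σ}

theorem label_eq_zero_iff {v : VS n m t} : label S σ v = 0 ↔ v = .c1 := by
  cases v <;> simp only [label] <;> (try split_ifs) <;> simp

theorem label_eq_one_iff {v : VS n m t} : label S σ v = 1 ↔ v = .c2 := by
  cases v <;> simp only [label] <;> (try split_ifs) <;> simp <;> omega

theorem label_eq_two_iff {v : VS n m t} : label S σ v = 2 ↔ ∃ j, v = .u j := by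
  cases v <;> simp only [label] <;> (try split_ifs) <;> simp <;> omega

theorem exists_posS_of_label_eq_sel {v : VS n m t} {s : Fin t} (hv : label S σ v = 4 + s) :
    ∃ k, posS S v = some (2 + (s : ℕ), k) := by
  cases v with
  | x s' | v s' | y s' =>
    simp only [label] at hv
    (try split_ifs at hv) <;> first
      | omega
      | obtain rfl : s' = s := Fin.ext (by omega)
        exact ⟨_, rfl⟩
  | _ => simp only [label] at hv; omega

theorem exists_pred_of_label_eq_three_sel {v : VS n m t} (hv : label S σ v = 3) {s : Fin t}
    {k : ℕ} (h : posS S v = some (2 + (s : ℕ), k + 1)) :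
    ∃ w, label S σ w = 3 ∧ posS S w = some (2 + (s : ℕ), k) := by
  rw [label_of_posS_sel S σ h] at hv
  have hk : k + 1 ≤ cutPos S σ s := by
    by_contra hk
    rw [if_neg hk] at hv
    omega
  have := Nat.add_mul_succ_add_lt (σ s).isLt (Nat.sub_le n #(S (σ s)))
  obtain ⟨w, hw⟩ := exists_posS_sel (S := S) s (k := k) (by unfold cutPos at hk; omega)
  exact ⟨w, by rw [label_of_posS_sel S σ hw, if_pos (by omega)], hw⟩

theorem exists_pred_of_label_eq_three {v : VS n m t} (hv : label S σ v = 3) {br k : ℕ}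
    (h : posS S v = some (br, k + 1)) : ∃ w, label S σ w = 3 ∧ posS S w = some (br, k) := by
  cases v with
  | root => simp [posS] at h
  | c1 | c2 | u => simp [label] at hv
  | w i =>
    simp only [posS, Option.some.injEq, Prod.mk.injEq] at h
    obtain ⟨rfl, hi⟩ := h
    exact ⟨.w ⟨k, by omega⟩, rfl, rfl⟩
  | v0 s | x s | y s =>
    obtain rfl : br = 2 + s := by simp only [posS, Option.some.injEq, Prod.mk.injEq] at h; omega
    exact exists_pred_of_label_eq_three_sel hv h
  | v s =>
    obtain rfl : br = 2 + s := by simp only [posS_v, Option.some.injEq, Prod.mk.injEq] at h; omega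
    exact exists_pred_of_label_eq_three_sel hv h

variable (S σ)

theorem connected_label_eq_two (hn : 0 < n) :
    ((GS S).induce {v | label S σ v = 2}).Connected := by
  refine SimpleGraph.induce_connected_of_exists_adj_lt _ (a := .u ⟨0, hn⟩) rfl (depth S) ?_
  intro v hv hne
  obtain ⟨j, rfl⟩ := label_eq_two_iff.1 hv
  have hj : (j : ℕ) ≠ 0 := fun h => hne (congrArg _ (Fin.ext h))
  refine ⟨.u ⟨j - 1, by omega⟩, rfl, (adj_of_posS_succ (br := 0) (k := 2 + (j - 1)) rfl
    (by simp only [posS]; congr 2; omega)).symm, ?_⟩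
  simp only [depth, posS, Option.elim]
  omega

theorem connected_label_eq_three : ((GS S).induce {v | label S σ v = 3}).Connected := by
  refine SimpleGraph.induce_connected_of_exists_adj_lt _ (a := .root) rfl (depth S) ?_
  intro v hv hne
  obtain ⟨br, k, hk⟩ : ∃ br k, posS S v = some (br, k) := by
    cases v <;> simp [posS] at hne ⊢
  cases k with
  | zero => exact ⟨.root, rfl, (adj_root hk).symm, by rw [depth_eq hk]; exact Nat.succ_pos 0⟩
  | succ k =>
    obtain ⟨w, hw, hwk⟩ := exists_pred_of_label_eq_three hv hk
    exact ⟨w, hw, (adj_of_posS_succ hwk hk).symm, by simp [depth_eq hk, depth_eq hwk]⟩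

theorem connected_label_eq_sel (s : Fin t) :
    ((GS S).induce {v | label S σ v = 4 + s}).Connected := by
  refine SimpleGraph.induce_connected_of_exists_adj_lt _ (a := .y s (Fin.last m)) rfl
    (fun v => n + m * (n + 1) + m + 1 - depth S v) ?_
  intro v hv hne
  change label S σ v = 4 + s at hv
  obtain ⟨k, hk⟩ := exists_posS_of_label_eq_sel hv
  have hcut : cutPos S σ s < k := by
    by_contra hcut
    have := label_of_posS_sel S σ hk
    rw [if_pos (by omega)] at this
    omega
  have htop := posS_lt_of_ne_last hk hne
  obtain ⟨w, hw⟩ := exists_posS_sel (S := S) s htop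
  refine ⟨w, ?_, adj_of_posS_succ hk hw, ?_⟩
  · change label S σ w = 4 + s
    rw [label_of_posS_sel S σ hw, if_neg (by omega)]
  · simp only [depth_eq hk, depth_eq hw]
    omega

theorem connected_label_eq (hn : 0 < n) :
    ∀ l < t + 4, ((GS S).induce {v | label S σ v = l}).Connected
  | 0, _ => SimpleGraph.induce_connected_of_exists_adj_lt _ (a := .c1) rfl (fun _ => 0)
      fun _ hv hne => absurd (label_eq_zero_iff.1 hv) hne
  | 1, _ => SimpleGraph.induce_connected_of_exists_adj_lt _ (a := .c2) rfl (fun _ => 0)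
      fun _ hv hne => absurd (label_eq_one_iff.1 hv) hne
  | 2, _ => connected_label_eq_two S σ hn
  | 3, _ => connected_label_eq_three S σ
  | l + 4, hl => by
    rw [Nat.add_comm l 4]
    exact connected_label_eq_sel S σ ⟨l, by omega⟩

theorem district_zero : district S σ 0 = {.c1} := by
  ext v
  simp [mem_district, label_eq_zero_iff]

theorem district_one : district S σ 1 = {.c2} := by
  ext v
  simp [mem_district, label_eq_one_iff]

def hub (s : Fin t) : VS n m t := if h : (s : ℕ) = 0 then .root else .w ⟨s - 1, by omega⟩

def partner : VS n m t → VS n m t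
  | .v0 s _ => hub s
  | .v s i _ => .x s i
  | v => v

theorem hub_injective : Function.Injective (hub : Fin t → VS n m t) := by
  intro s s' h
  unfold hub at h
  split_ifs at h with h₁ h₂ h₂ <;> simp at h
  all_goals omega

theorem hub_ne_x {s s' : Fin t} {i : Fin m} : (hub s : VS n m t) ≠ .x s' i := by
  unfold hub
  split_ifs <;> simp

theorem label_hub (s : Fin t) : label S σ (hub s) = 3 := by
  unfold hub
  split_ifs <;> rfl

theorem chiS_hub (s : Fin t) : chiS (hub s : VS n m t) = .q := by
  unfold hub
  split_ifs <;> rfl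

theorem eq_v0_or_eq_v_of_label_eq_three {v : VS n m t} {j : Fin n} (hl : label S σ v = 3)
    (hc : chiS v = .a j) : (∃ s, v = .v0 s j) ∨ ∃ s i, v = .v s i j := by
  cases v <;> simp [chiS, label] at hc hl ⊢ <;> exact hc

theorem card_votes_a_lt_q {j : Fin n} {s₀ : Fin t} (hs₀ : j ∈ S (σ s₀)) :
    #{v ∈ district S σ 3 | chiS v = .a j} < #{v ∈ district S σ 3 | chiS v = .q} := by
  have hx : VS.x s₀ (σ s₀) ∈ {v ∈ district S σ 3 | chiS v = .q} :=
    mem_filter.2 ⟨mem_district.2 (by simp [label]), rfl⟩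
  refine lt_of_le_of_lt (card_le_card_of_injOn partner ?_ ?_) (card_erase_lt_of_mem hx)
  · intro v hv
    rw [mem_coe, mem_filter, mem_district] at hv
    rw [mem_coe, mem_erase, mem_filter, mem_district]
    obtain ⟨hl, hc⟩ := hv
    rcases eq_v0_or_eq_v_of_label_eq_three S σ hl hc with ⟨s, rfl⟩ | ⟨s, i, rfl⟩
    · exact ⟨hub_ne_x, label_hub S σ s, chiS_hub s⟩
    have hi : i < σ s ∨ i = σ s ∧ j ∉ S (σ s) := by
      simp only [label] at hl
      split_ifs at hl with hi
      · exact hi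
      · omega
    refine ⟨?_, by simp [partner, label, hi.elim le_of_lt fun h => h.1.le], rfl⟩
    simp only [partner, ne_eq, VS.x.injEq]
    rintro ⟨rfl, rfl⟩
    rcases hi with h | ⟨-, h⟩
    · exact lt_irrefl _ h
    · exact h hs₀
  · intro a ha b hb h
    rw [mem_coe, mem_filter, mem_district] at ha hb
    rcases eq_v0_or_eq_v_of_label_eq_three S σ ha.1 ha.2 with ⟨s, rfl⟩ | ⟨s, i, rfl⟩ <;>
      rcases eq_v0_or_eq_v_of_label_eq_three S σ hb.1 hb.2 with ⟨s', rfl⟩ | ⟨s', i', rfl⟩ <;>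
      simp only [partner] at h
    · rw [hub_injective h]
    · exact absurd h hub_ne_x
    · exact absurd h.symm hub_ne_x
    · cases h
      rfl

theorem winsIn_district_three (hσ : ∀ j, ∃ s, j ∈ S (σ s)) :
    winsIn chiS CS.q (district S σ 3) := by
  have hq : 0 < #{v ∈ district S σ 3 | chiS v = .q} :=
    card_pos.2 ⟨.root, mem_filter.2 ⟨mem_district.2 rfl, rfl⟩⟩
  rw [winsIn_iff]
  intro c hc
  cases c with
  | q => exact absurd rfl hc
  | a j =>
    obtain ⟨s, hs⟩ := hσ j
    exact card_votes_a_lt_q S σ hs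
  | p | b =>
    refine lt_of_eq_of_lt (card_eq_zero.2 (filter_eq_empty_iff.2 fun v hv => ?_)) hq
    rw [mem_district] at hv
    cases v <;> simp [label, chiS] at hv ⊢ <;> omega

theorem winsIn_district_sel (s : Fin t) : winsIn chiS (CS.b s) (district S σ (4 + s)) := by
  have hb : m + 1 ≤ #{v ∈ district S σ (4 + s) | chiS v = .b s} := by
    calc m + 1 = #(univ.image (VS.y s : Fin (m + 1) → VS n m t)) := by
          rw [card_image_of_injective _ fun _ _ h => by cases h; rfl, card_univ, Fintype.card_fin]
      _ ≤ _ := card_le_card fun v hv => by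
          obtain ⟨i, -, rfl⟩ := mem_image.1 hv
          exact mem_filter.2 ⟨mem_district.2 rfl, rfl⟩
  rw [winsIn_iff]
  intro c hc
  suffices #{v ∈ district S σ (4 + s) | chiS v = c} ≤ m by omega
  cases c with
  | q =>
    refine (card_le_card (t := univ.image (VS.x s)) fun v hv => ?_).trans
      (card_image_le.trans (card_univ.trans (Fintype.card_fin m)).le)
    rw [mem_filter, mem_district] at hv
    cases v <;> simp [label, chiS] at hv ⊢
    all_goals first | omega | exact Fin.ext (by split_ifs at hv <;> omega)
  | a j =>
    refine (card_le_card (t := univ.image fun i => VS.v s i j) fun v hv => ?_).trans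
      (card_image_le.trans (card_univ.trans (Fintype.card_fin m)).le)
    rw [mem_filter, mem_district] at hv
    cases v <;> simp [label, chiS] at hv ⊢ <;> obtain ⟨hv, rfl⟩ := hv
    all_goals first | omega | exact ⟨Fin.ext (by split_ifs at hv <;> omega), rfl⟩
  | p =>
    refine le_of_eq_of_le (card_eq_zero.2 (filter_eq_empty_iff.2 fun v hv => ?_)) (Nat.zero_le m)
    rw [mem_district] at hv
    cases v <;> simp [label, chiS] at hv ⊢ <;> omega
  | b s' =>
    refine le_of_eq_of_le (card_eq_zero.2 (filter_eq_empty_iff.2 fun v hv => ?_)) (Nat.zero_le m)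
    rw [mem_district] at hv
    cases v <;> simp [label, chiS] at hv ⊢
    rintro rfl
    exact hc (congrArg _ (Fin.ext hv))

def homeDistrict : CS n t → ℕ
  | .p => 0
  | .q => 3
  | .a _ => 2
  | .b s => 4 + s

theorem label_eq_homeDistrict {v : VS n m t} (hv : label S σ v ≤ 2) (hp : chiS v ≠ .p) :
    label S σ v = homeDistrict (chiS v) := by
  cases v <;> simp only [label, chiS, homeDistrict] at hv hp ⊢ <;> (try split_ifs at hv ⊢) <;>
    first | omega | exact absurd rfl hp

theorem eq_homeDistrict_of_leadsIn (hn : 0 < n) (hσ : ∀ j, ∃ s, j ∈ S (σ s)) {c : CS n t}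
    (hc : c ≠ .p) {l : ℕ} (hl : l < t + 4) (h : leadsIn chiS c (district S σ l)) :
    l = homeDistrict c := by
  obtain hl₂ | rfl | hl₄ : l ≤ 2 ∨ l = 3 ∨ 4 ≤ l := by omega
  · obtain ⟨v, hv⟩ := exists_label_eq S σ hn l hl
    obtain ⟨w, hw, rfl⟩ := h.exists_mem ⟨v, mem_district.2 hv⟩
    rw [mem_district] at hw
    exact hw ▸ label_eq_homeDistrict S σ (hw ▸ hl₂) hc
  · rw [h.eq_of_winsIn (winsIn_district_three S σ hσ)]
    rfl
  · obtain ⟨s, rfl⟩ : ∃ s : Fin t, l = 4 + s := ⟨⟨l - 4, by omega⟩, by simp; omega⟩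
    rw [h.eq_of_winsIn (winsIn_district_sel S σ s)]
    rfl

end SubdividedStar

open SubdividedStar

theorem star_cover_imp_gerrymander_general (n m t : ℕ) (hn : 1 ≤ n)
    (S : Fin m → Finset (Fin n))
    (hcover : ∃ X : Finset (Fin m), X.card ≤ t ∧ ∀ j : Fin n, ∃ i ∈ X, j ∈ S i) :
    ∃ P : Finset (Finset (VS n m t)),
      IsDistrictPartition (GS S) (t + 4) P ∧ SatisfyingFor chiS CS.p P := by
  obtain ⟨X, hXt, hX⟩ := hcover
  obtain ⟨i₀, hi₀, -⟩ := hX ⟨0, hn⟩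
  obtain ⟨σ, hσX⟩ := exists_subset_range_fin_of_card_le ⟨i₀, hi₀⟩ hXt
  have hσ : ∀ j, ∃ s, j ∈ S (σ s) := fun j => by
    obtain ⟨i, hi, hj⟩ := hX j
    obtain ⟨s, rfl⟩ := hσX hi
    exact ⟨s, hj⟩
  have mem_P {l} (hl : l < t + 4) : district S σ l ∈ (range (t + 4)).image (district S σ) :=
    mem_image_of_mem _ (mem_range.2 hl)
  refine ⟨(range (t + 4)).image (district S σ),
    isDistrictPartition_fibers _ _ _ (label_lt S σ) (exists_label_eq S σ hn)
      (connected_label_eq S σ hn),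
    satisfyingFor_of_two_wins (mem_P (by omega : 0 < t + 4)) (mem_P (by omega : 1 < t + 4))
      ?_ ?_ ?_ ?_⟩
  · simp [district_zero, district_one]
  · rw [district_zero]
    exact winsIn_singleton VS.c1
  · rw [district_one]
    exact winsIn_singleton VS.c2
  · rintro c hc _ hD _ hD' h h'
    obtain ⟨l, hl, rfl⟩ := mem_image.1 hD
    obtain ⟨l', hl', rfl⟩ := mem_image.1 hD'
    rw [eq_homeDistrict_of_leadsIn S σ hn hσ hc (mem_range.1 hl) h,
      eq_homeDistrict_of_leadsIn S σ hn hσ hc (mem_range.1 hl') h']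

/-- forward direction of Theorem 2.  Let `(U, F, t)` be a Set Cover
instance in which every element belongs to at least one set.  If there exists `X ⊆ F` with
`|X| ≤ t` and `∪_{S ∈ X} S = U`, then the subdivided-star gerrymandering instance constructed
from `(U, F, t)` admits a district-partition into `k = t + 4` districts that is satisfying for
the preferred candidate `p`. -/
theorem star_cover_imp_gerrymander (n m t : ℕ) (hn : 1 ≤ n) (htm : t ≤ m)
    (S : Fin m → Finset (Fin n))
    (hcov : ∀ j : Fin n, ∃ i : Fin m, j ∈ S i)
    (hcover : ∃ X : Finset (Fin m), X.card ≤ t ∧ ∀ j : Fin n, ∃ i ∈ X, j ∈ S i) :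
    ∃ P : Finset (Finset (VS n m t)),
      IsDistrictPartition (GS S) (t + 4) P ∧ SatisfyingFor chiS CS.p P :=
  star_cover_imp_gerrymander_general n m t hn S hcover
end
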